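/- arXiv:math/0302174 — 8 statements merged into one kernel-verified Lean document; each statement's English description precedes it below -/
import Mathlib

section
/- Let C be a category closed under filtered colimits of cardinality at most ℵ. An object X of Ind^ℵ(C) lies in the essential image of C in Ind^ℵ(C) if and only if for every object X' = "colim" X'_i of Ind^ℵ(C), the canonical map Hom_{Ind(C)}(X', X) evaluated as X(colim X'_i) → lim X(X'_i) is a bijection. -/
/-!
STATEMENT 0: Let `C` be a category closed under filtered colimits of cardinality at most `ℵ`.
An object `X` of `Ind^ℵ(C)` lies in the essential image of `C` in `Ind^ℵ(C)` if and only if for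
every object `X' = "colim" X'_i` of `Ind^ℵ(C)`, the canonical map
`X(colim X'_i) → lim X(X'_i) ≅ Hom_{Ind(C)}(X', X)` is a bijection.

We realize `Ind(C)` as the full subcategory of presheaves `Cᵒᵖ ⥤ Type v` admitting a presentation
as a filtered colimit of representables (`IndObjectPresentation`), and `Ind^ℵ(C)` by bounding the
cardinality of the indexing category.
-/

open CategoryTheory CategoryTheory.Limits Opposite

universe v u

theorem stmt_0 {C : Type u} [Category.{v} C] (ℵ : Cardinal.{v})
    -- `C` is closed under inductive limits of cardinality `≤ ℵ`:
    (hC : ∀ (I : Type v) [SmallCategory I] [IsFiltered I], Cardinal.mk I ≤ ℵ →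
      ∀ D : I ⥤ C, HasColimit D)
    -- `X ∈ Ind^ℵ(C)`:
    (X : Cᵒᵖ ⥤ Type v)
    (hX : ∃ P : IndObjectPresentation X, Cardinal.mk P.I ≤ ℵ) :
    -- `X` lies in the essential image of `C` iff the canonical evaluation-comparison map is
    -- bijective for every `X' = "colim" X'_j ∈ Ind^ℵ(C)`:
    (∃ c : C, Nonempty (X ≅ yoneda.obj c)) ↔
      (∀ (J : Type v) [SmallCategory J] [IsFiltered J], Cardinal.mk J ≤ ℵ →
        ∀ (D' : J ⥤ C) (hco : HasColimit D'),
          Function.Bijective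
            (fun x : X.obj (op (@colimit J _ C _ D' hco)) =>
              (⟨fun j => X.map (@colimit.ι J _ C _ D' hco j).op x, by
                  intro i j φ
                  dsimp only
                  rw [← @colimit.w J _ C _ D' hco _ _ φ, op_comp,
                    FunctorToTypes.map_comp_apply]⟩ :
                {f : ∀ j : J, X.obj (op (D'.obj j)) //
                  ∀ (i j : J) (φ : i ⟶ j), X.map (D'.map φ).op (f j) = f i}))) := by
  constructor
  · rintro ⟨c, ⟨e⟩⟩ J _ _ hJ D' hco
    letI : HasColimit D' := hco
    constructor
    · intro x y hxy
      have hxy' : ∀ j : J, X.map (colimit.ι D' j).op x = X.map (colimit.ι D' j).op y :=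
        fun j => congrFun (congrArg Subtype.val hxy) j
      apply (e.app (op (colimit D'))).toEquiv.injective
      show e.hom.app _ x = e.hom.app _ y
      have : ∀ j : J, colimit.ι D' j ≫ e.hom.app (op (colimit D')) x
          = colimit.ι D' j ≫ e.hom.app (op (colimit D')) y := by
        intro j
        have nx := NatTrans.naturality_apply (F := X) (G := yoneda.obj c) e.hom (colimit.ι D' j).op x
        have ny := NatTrans.naturality_apply (F := X) (G := yoneda.obj c) e.hom (colimit.ι D' j).op y
        have := congrArg (e.hom.app (op (D'.obj j))) (hxy' j)
        rw [nx, ny] at this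
        exact this
      exact colimit.hom_ext this
    · rintro ⟨f, hf⟩
      let s : Cocone D' :=
        { pt := c
          ι :=
            { app := fun j => e.hom.app (op (D'.obj j)) (f j)
              naturality := by
                intro i j φ
                have := congrArg (e.hom.app (op (D'.obj i))) (hf i j φ)
                rw [NatTrans.naturality_apply (F := X) (G := yoneda.obj c) e.hom (D'.map φ).op (f j)] at this
                simpa using this } }
      refine ⟨e.inv.app _ (colimit.desc D' s), ?_⟩
      apply Subtype.ext
      funext j
      show X.map (colimit.ι D' j).op (e.inv.app _ (colimit.desc D' s)) = f j
      apply (e.app (op (D'.obj j))).toEquiv.injective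
      show e.hom.app _ (X.map (colimit.ι D' j).op (e.inv.app _ (colimit.desc D' s)))
        = e.hom.app _ (f j)
      rw [NatTrans.naturality_apply (F := X) (G := yoneda.obj c) e.hom (colimit.ι D' j).op]
      have : e.hom.app (op (colimit D')) (e.inv.app (op (colimit D')) (colimit.desc D' s))
          = colimit.desc D' s := by
        simp
      rw [this]
      show colimit.ι D' j ≫ colimit.desc D' s = e.hom.app _ (f j)
      simp [s]
  · intro h
    obtain ⟨P, hP⟩ := hX
    haveI : HasColimit P.F := hC P.I hP P.F
    have hcompat : ∀ (i j : P.I) (φ : i ⟶ j),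
        X.map (P.F.map φ).op (yonedaEquiv (P.ι.app j)) = yonedaEquiv (P.ι.app i) := by
      intro i j φ
      rw [yonedaEquiv_naturality]
      congr 1
      have := P.ι.naturality φ
      simpa using this
    obtain ⟨x, hx⟩ := (h P.I hP P.F inferInstance).2 ⟨fun j => yonedaEquiv (P.ι.app j), hcompat⟩
    have hx' : ∀ j : P.I, X.map (colimit.ι P.F j).op x = yonedaEquiv (P.ι.app j) :=
      fun j => congrFun (congrArg Subtype.val hx) j
    let s' : Cocone (P.F ⋙ yoneda) :=
      { pt := yoneda.obj (colimit P.F)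
        ι :=
          { app := fun j => yoneda.map (colimit.ι P.F j)
            naturality := by
              intro i j φ
              dsimp
              rw [← yoneda.map_comp, colimit.w, Category.comp_id] } }
    let g : X ⟶ yoneda.obj (colimit P.F) := P.isColimit.desc s'
    refine ⟨colimit P.F, ⟨⟨g, yonedaEquiv.symm x, ?_, ?_⟩⟩⟩
    · -- g ≫ yonedaEquiv.symm x = 𝟙 X
      apply P.isColimit.hom_ext
      intro j
      have fac : P.ι.app j ≫ g = yoneda.map (colimit.ι P.F j) := P.isColimit.fac s' j
      show P.ι.app j ≫ g ≫ yonedaEquiv.symm x = P.ι.app j ≫ 𝟙 X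
      have key : P.ι.app j ≫ g ≫ yonedaEquiv.symm x = P.ι.app j := by
        rw [← Category.assoc, fac, yonedaEquiv_symm_naturality_left, hx']
        exact Equiv.symm_apply_apply _ _
      rw [key]
      exact (Category.comp_id _).symm
    · -- yonedaEquiv.symm x ≫ g = 𝟙
      apply yonedaEquiv.injective
      rw [yonedaEquiv_comp, Equiv.apply_symm_apply]
      have h1 : yonedaEquiv (𝟙 (yoneda.obj (colimit P.F))) = 𝟙 (colimit P.F) := by
        rw [← yoneda.map_id, yonedaEquiv_yoneda_map]
      rw [h1]
      show g.app (op (colimit P.F)) x = 𝟙 (colimit P.F)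
      apply colimit.hom_ext
      intro j
      have nat := NatTrans.naturality_apply (F := X) (G := yoneda.obj (colimit P.F)) g
        (colimit.ι P.F j).op x
      have fac : P.ι.app j ≫ g = yoneda.map (colimit.ι P.F j) := P.isColimit.fac s' j
      have key : g.app (op (P.F.obj j)) (X.map (colimit.ι P.F j).op x) = colimit.ι P.F j := by
        have k2 := yonedaEquiv_comp (P.ι.app j) g
        rw [fac, yonedaEquiv_yoneda_map] at k2
        rw [hx']
        exact k2.symm
      rw [nat] at key
      simp only [Category.comp_id]
      exact key
end

section
/- For any category C and any cardinal ℵ, the category Ind^ℵ(C) is closed under filtered colimits of cardinality at most ℵ; that is, the canonical embedding Ind^ℵ(C) → Ind(Ind^ℵ(C)) restricted to systems of cardinality ≤ ℵ admits a left adjoint (an inductive limit functor) defined everywhere. -/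
/-!
STATEMENT 1: For any category `C` and any (infinite) cardinal `ℵ`, the category `Ind^ℵ(C)` is
closed under filtered colimits of cardinality at most `ℵ`: a filtered colimit, indexed by a
category of cardinality `≤ ℵ`, of presheaves each admitting a presentation as a filtered colimit
of representables with indexing category of cardinality `≤ ℵ`, again admits such a presentation.
(The colimit of presheaves computes the inductive limit in `Ind(C)`, so this says the inductive
limit functor is defined on all of `Ind^ℵ(Ind^ℵ(C))` restricted to such systems.)
-/

open CategoryTheory CategoryTheory.Limits

universe v u

theorem stmt_1 {C : Type u} [Category.{v} C] (ℵ : Cardinal.{v})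
    (hℵ : Cardinal.aleph0 ≤ ℵ)
    (J : Type v) [SmallCategory J] [IsFiltered J] (hJ : Cardinal.mk J ≤ ℵ)
    (F : J ⥤ (Cᵒᵖ ⥤ Type v))
    (hF : ∀ j : J, ∃ P : IndObjectPresentation (F.obj j), Cardinal.mk P.I ≤ ℵ) :
    ∃ P : IndObjectPresentation (colimit F), Cardinal.mk P.I ≤ ℵ := by
  choose P hP using hF
  haveI hD : IsFiltered (CostructuredArrow yoneda (colimit F)) :=
    IndizationClosedUnderFilteredColimitsAux.isFiltered F (fun j => .mk (P j))
  -- a weakly terminal family of size ≤ ℵ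
  let g : (Σ j : J, (P j).I) → CostructuredArrow yoneda (colimit F) := fun p =>
    (CostructuredArrow.map (colimit.ι F p.1)).obj ((P p.1).toCostructuredArrow.obj p.2)
  let S : Set (CostructuredArrow yoneda (colimit F)) := Set.range g
  have hweak : ∀ A : CostructuredArrow yoneda (colimit F), ∃ t ∈ S, Nonempty (A ⟶ t) := by
    intro A
    obtain ⟨i, y, hy⟩ := FunctorToTypes.jointly_surjective'.{v, v} F _ (yonedaEquiv A.hom)
    let y' : CostructuredArrow yoneda (F.obj i) := CostructuredArrow.mk (yonedaEquiv.symm y)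
    obtain ⟨x⟩ : Nonempty (StructuredArrow y' (P i).toCostructuredArrow) :=
      IsConnected.is_nonempty
    refine ⟨g ⟨i, x.right⟩, Set.mem_range_self _, ⟨?_⟩⟩
    refine ?_ ≫ (CostructuredArrow.map (colimit.ι F i)).map x.hom
    refine CostructuredArrow.homMk (𝟙 A.left) (yonedaEquiv.injective ?_)
    simp [-EmbeddingLike.apply_eq_iff_eq, hy, yonedaEquiv_comp, y']
  -- the full subcategory on S, shrunk to Type v
  let T := ObjectProperty.FullSubcategory (fun A : CostructuredArrow yoneda (colimit F) => A ∈ S)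
  haveI : Small.{v} T := by
    haveI : Small.{v} S := inferInstance
    exact small_of_injective (f := fun t : T => (⟨t.obj, t.property⟩ : S))
      (fun a b h => ObjectProperty.FullSubcategory.ext (by simpa using congrArg Subtype.val h))
  let eT := equivShrink.{v} T
  let I : Type v := Shrink.{v} T
  letI : SmallCategory I := (InducedCategory.instCategory : Category (InducedCategory T (eT.symm : I → T)))
  let G : I ⥤ CostructuredArrow yoneda (colimit F) :=
    inducedFunctor (eT.symm : I → T) ⋙ ObjectProperty.ι (fun A : CostructuredArrow yoneda (colimit F) => A ∈ S)
  have hex : ∀ A : CostructuredArrow yoneda (colimit F), ∃ i : I, Nonempty (A ⟶ G.obj i) := by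
    intro A
    obtain ⟨t, ht, h⟩ := hweak A
    refine ⟨eT ⟨t, ht⟩, ?_⟩
    have : G.obj (eT ⟨t, ht⟩) = t := by simp [G]
    rw [this]; exact h
  haveI : G.Full := inferInstanceAs
    ((inducedFunctor (eT.symm : I → T)  ⋙  ObjectProperty.ι (fun A : CostructuredArrow yoneda (colimit F) => A ∈ S)).Full)
  haveI : G.Faithful := inferInstanceAs
    ((inducedFunctor (eT.symm : I → T)  ⋙  ObjectProperty.ι (fun A : CostructuredArrow yoneda (colimit F) => A ∈ S)).Faithful)
  haveI : IsFiltered I := IsFiltered.of_exists_of_isFiltered_of_fullyFaithful G hex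
  haveI : G.Final := Functor.final_of_exists_of_isFiltered_of_fullyFaithful G hex
  let c := (Presheaf.tautologicalCocone (colimit F)).whisker G
  have hc : IsColimit c := (Functor.Final.isColimitWhiskerEquiv _ _).symm
    (Presheaf.isColimitTautologicalCocone _)
  refine ⟨⟨I, G ⋙ CostructuredArrow.proj yoneda (colimit F), c.ι, hc⟩, ?_⟩
  -- cardinality count
  show Cardinal.mk I ≤ ℵ
  rw [← Cardinal.lift_le.{u}]
  have h1 : Cardinal.lift.{u} (Cardinal.mk I) = Cardinal.mk T :=
    Cardinal.lift_mk_shrink''.{u, v} T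
  have h2 : Cardinal.mk T = Cardinal.mk S :=
    Cardinal.mk_congr ⟨fun t => ⟨t.obj, t.property⟩, fun s => ⟨s.1, s.2⟩,
      fun _ => rfl, fun _ => rfl⟩
  have h3 : Cardinal.mk (Σ j : J, (P j).I) ≤ ℵ := by
    rw [Cardinal.mk_sigma]
    calc (Cardinal.sum fun j => Cardinal.mk (P j).I)
        ≤ Cardinal.sum fun _ : J => ℵ := Cardinal.sum_le_sum _ _ hP
      _ = Cardinal.mk J * ℵ := Cardinal.sum_const' J ℵ
      _ ≤ ℵ * ℵ := mul_le_mul' hJ le_rfl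
      _ = ℵ := Cardinal.mul_eq_self hℵ
  have h4 : Cardinal.mk S ≤ Cardinal.lift.{u} (Cardinal.mk (Σ j : J, (P j).I)) := by
    have h := Cardinal.mk_range_le_lift (f := g)
    rw [Cardinal.lift_id'] at h
    rw [Cardinal.lift_umax.{v, u}] at h
    exact h
  rw [h1, h2]
  exact h4.trans (Cardinal.lift_le.{u}.mpr h3)
end

section
/- Let C be an abelian category in which every object has a set of subobjects (C is well-powered). Let F, F' : C^op → Ab be left-exact functors and F → F' a natural transformation such that F(X) → F'(X) is injective for every X. If F' is ind-representable, then F is ind-representable. -/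
/-!
STATEMENT 6: Let `C` be a well-powered abelian category.  Let `F, F' : Cᵒᵖ → Set` (equivalently,
the underlying set-valued functors of abelian-group valued functors) be left-exact contravariant
functors and `F ⟶ F'` a natural transformation with injective components.  If `F'` is
ind-representable then so is `F`.
-/

open CategoryTheory CategoryTheory.Limits

universe v u

open Opposite in
/-- If `h : X ⟶ Q` is the cokernel projection of `u` and `F` is left exact, then any
`x : F X` killed (in the appropriate sense) by `u` lifts along `F.map h.op`. -/
theorem stmt_6_lift {C : Type u} [Category.{v} C] [Abelian C]
    (F : Cᵒᵖ ⥤ Type v) [PreservesFiniteLimits F] {N X : C} (u : N ⟶ X)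
    (x : F.obj (op X)) (hx : F.map u.op x = F.map ((0 : N ⟶ X)).op x) :
    ∃ z : F.obj (op (cokernel u)), F.map (cokernel.π u).op z = x := by
  have w₀ : (cokernel.π u).op ≫ u.op = (cokernel.π u).op ≫ ((0 : N ⟶ X)).op := by
    rw [← op_comp, ← op_comp, cokernel.condition, zero_comp]
  have l : IsLimit (Fork.ofι (cokernel.π u).op w₀ :
      Fork u.op ((0 : N ⟶ X)).op) := by
    have := CokernelCofork.IsColimit.ofπOp (cokernel.π u) (cokernel.condition u)
      (cokernelIsCokernel u)
    convert this using 2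
  have l2 := isLimitForkMapOfIsLimit F w₀ l
  obtain ⟨z, hz, -⟩ := (Types.type_equalizer_iff_unique (F.map (cokernel.π u).op)
    (by simp only [← F.map_comp, w₀])).mp ⟨l2⟩ x hx
  exact ⟨z, hz⟩

theorem stmt_6 {C : Type u} [Category.{v} C] [Abelian C] [WellPowered.{v} C]
    (F F' : Cᵒᵖ ⥤ Type v) [PreservesFiniteLimits F] [PreservesFiniteLimits F']
    (α : F ⟶ F') (hα : ∀ X : Cᵒᵖ, Function.Injective (α.app X))
    (hF' : IsIndObject F') : IsIndObject F := by
  have hfil : IsFiltered (CostructuredArrow yoneda F) :=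
    isFiltered_costructuredArrow_yoneda_of_preservesFiniteLimits F
  haveI hfs' : FinallySmall.{v} (CostructuredArrow yoneda F') := hF'.finallySmall
  obtain ⟨S', hS'small, hS'⟩ :
      ∃ (s : Set (CostructuredArrow yoneda F')) (_ : Small.{v} s),
        ∀ i, ∃ j ∈ s, Nonempty (i ⟶ j) :=
    FinallySmall.exists_small_weakly_terminal_set (CostructuredArrow yoneda F')
  -- the candidate small weakly terminal set
  let ι : (Σ (j : S') (K : Subobject (j.1.left)), F.obj (Opposite.op (K : C))) →
      CostructuredArrow yoneda F := fun p => CostructuredArrow.mk (yonedaEquiv.symm p.2.2)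
  have : Small.{v} S' := hS'small
  refine (isIndObject_iff F).mpr ⟨hfil, finallySmall_of_small_weakly_terminal_set
    (Set.range ι) (fun i => ?_)⟩
  -- push `i` forward to `F'` and map it to the weakly terminal set of `F'`
  obtain ⟨j', hj', ⟨φ⟩⟩ := hS' (CostructuredArrow.mk (i.hom ≫ α))
  obtain ⟨g, hw⟩ : ∃ g : i.left ⟶ j'.left, yoneda.map g ≫ j'.hom = i.hom ≫ α :=
    ⟨φ.left, by simp⟩
  have hgy : F'.map g.op (yonedaEquiv j'.hom) = α.app _ (yonedaEquiv i.hom) := by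
    rw [yonedaEquiv_naturality, hw, yonedaEquiv_comp]
  -- the key computation using injectivity of `α`
  have key : F.map (kernel.ι g).op (yonedaEquiv i.hom)
      = F.map ((0 : kernel g ⟶ i.left)).op (yonedaEquiv i.hom) := by
    apply hα
    rw [FunctorToTypes.naturality, FunctorToTypes.naturality, ← hgy,
      ← FunctorToTypes.map_comp_apply, ← FunctorToTypes.map_comp_apply,
      ← op_comp, ← op_comp, kernel.condition, zero_comp]
  obtain ⟨z₀, hz₀⟩ := stmt_6_lift F (kernel.ι g) _ key
  -- package the coimage as a subobject of `j'.left`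
  let m : Abelian.coimage g ⟶ j'.left := Abelian.factorThruCoimage g
  let K : Subobject j'.left := Subobject.mk m
  let e₀ : (K : C) ≅ Abelian.coimage g := Subobject.underlyingIso m
  let z : F.obj (Opposite.op (K : C)) := F.map e₀.hom.op z₀
  refine ⟨ι ⟨⟨j', hj'⟩, K, z⟩, ⟨_, rfl⟩, ⟨CostructuredArrow.homMk
    (cokernel.π (kernel.ι g) ≫ e₀.inv) ?_⟩⟩
  have hmap : F.map (cokernel.π (kernel.ι g) ≫ e₀.inv).op z = yonedaEquiv i.hom := by
    show F.map (cokernel.π (kernel.ι g) ≫ e₀.inv).op (F.map e₀.hom.op z₀) = _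
    rw [← FunctorToTypes.map_comp_apply, ← op_comp]
    have : (cokernel.π (kernel.ι g) ≫ e₀.inv) ≫ e₀.hom = cokernel.π (kernel.ι g) := by
      simp
    rw [this, hz₀]
  show yoneda.map (cokernel.π (kernel.ι g) ≫ e₀.inv) ≫ yonedaEquiv.symm z = i.hom
  rw [yonedaEquiv_symm_naturality_left, hmap]
  exact yonedaEquiv.symm_apply_apply i.hom
end

section
/- Let X be an object of the category bSet := Ind(Pro(Set_0)) and V, W vector spaces over ℂ. Then an action X × V → W in the sense of the pseudo-action of bSet on Vect (i.e., an element of CHom(X ⊗ V, W) obtained by ind/pro-extending the evident pseudo-action of Set_0 on Vect_0) is the same data as a continuous map X^top × V → W, linear in V, where V and W carry the discrete topology and X^top is the topological space associated to X. -/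
/-!
STATEMENT 8: Let `X ∈ bSet = Ind(Pro(Set₀))` and let `V`, `W` be vector spaces over `ℂ`.  An
action `X × V → W` in the sense of the pseudo-action of `bSet` on `Vect` is the same data as a
continuous map `X^top × V → W`, linear in `V`, where `V` and `W` carry the discrete topology.

We present `X` as a filtered diagram `D : J ⥤ Profinite` (i.e. `J ⥤ Pro(Set₀)`), and `X^top` as
the colimit of the underlying topological spaces.  An element of `CHom(X ⊗ V, W)` is a
compatible family, indexed by `j : J`, of maps `(D.obj j) × V → W` which are linear in `V` and
locally constant in the profinite variable (this is the limit over `j` of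
`CHom(X_j ⊗ V, W)`, each of which is computed by finite-level data).  A continuous map
`X^top × V → W` with `V`, `W` discrete is precisely a map linear in `V` and locally constant in
the first variable.  The canonical restriction map from continuous maps to compatible families
is a bijection.
-/

open CategoryTheory CategoryTheory.Limits

noncomputable section

variable (J : Type) [SmallCategory J] [IsFiltered J] (D : J ⥤ Profinite.{0})
  (V W : Type) [AddCommGroup V] [Module ℂ V] [AddCommGroup W] [Module ℂ W]

/-- The topological space `X^top` associated to the ind-object `X = "colim" D`. -/
def Xtop : TopCat := colimit (D ⋙ forget₂ Profinite TopCat)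

/-- The canonical structure maps `X_j^top → X^top`. -/
def ιX (j : J) : ↑(D.obj j) → Xtop J D := fun x =>
  (colimit.ι (D ⋙ forget₂ Profinite TopCat) j) x

/-- Continuous maps `X^top × V → W`, linear in `V`, with `V` and `W` discrete; continuity in
the first variable amounts to local constancy. -/
def ContActions : Type :=
  {F : ↑(Xtop J D) × V → W //
    (∀ x : ↑(Xtop J D), IsLinearMap ℂ fun v => F (x, v)) ∧
    (∀ v : V, IsLocallyConstant fun x : ↑(Xtop J D) => F (x, v))}

/-- Elements of `CHom(X ⊗ V, W)`: compatible families of finite-level actions. -/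
def CHomActions : Type :=
  {f : ∀ j : J, ↑(D.obj j) → (V →ₗ[ℂ] W) //
    (∀ (j : J) (v : V), IsLocallyConstant fun x : ↑(D.obj j) => f j x v) ∧
    (∀ (i j : J) (φ : i ⟶ j) (x : ↑(D.obj i)), f j ((D ⋙ forget₂ Profinite TopCat).map φ x) = f i x)}

/-- The canonical restriction map from continuous actions of `X^top` to compatible families of
finite-level actions. -/
def restrictToLevels : ContActions J D V W → CHomActions J D V W := fun F =>
  ⟨fun j x => IsLinearMap.mk' (fun v => F.1 (ιX J D j x, v)) (F.2.1 _),
    ⟨fun j v => (F.2.2 v).comp_continuous (by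
        have : Continuous fun x : ↑(D.obj j) =>
            (colimit.ι (D ⋙ forget₂ Profinite TopCat) j) x :=
          (colimit.ι (D ⋙ forget₂ Profinite TopCat) j).hom.continuous
        exact this),
      by
        intro i j φ x
        apply LinearMap.ext
        intro v
        have h := ConcreteCategory.congr_hom (colimit.w (D ⋙ forget₂ Profinite TopCat) φ) x
        simp only [comp_apply] at h
        simp only [IsLinearMap.mk'_apply, ιX]
        exact congrArg (fun y => F.1 (y, v)) h⟩⟩

/-- an action `X × V → W` in the sense of the pseudo-action of `bSet` on `Vect` is
the same data as a continuous map `X^top × V → W`, linear in `V`, for the discrete topology on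
`V` and `W`: the canonical restriction map is a bijection. -/
theorem stmt_8 : Function.Bijective (restrictToLevels J D V W) := by
  set G := D ⋙ forget₂ Profinite TopCat with hG
  constructor
  · rintro ⟨F, hF⟩ ⟨F', hF'⟩ h
    have h' : ∀ (j : J) (x : ↑(D.obj j)) (v : V), F (ιX J D j x, v) = F' (ιX J D j x, v) := by
      intro j x v
      have := congrArg (fun g => (g.1 j x).toFun v) h
      simpa [restrictToLevels] using this
    apply Subtype.ext
    funext ⟨x, v⟩
    obtain ⟨j, y, rfl⟩ := Concrete.colimit_exists_rep G x
    exact h' j y v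
  · rintro ⟨f, hlc, hcomp⟩
    -- define the function on the colimit
    have hrep : ∀ x : ↑(Xtop J D), ∃ (j : J) (y : ↑(D.obj j)), colimit.ι G j y = x :=
      fun x => Concrete.colimit_exists_rep G x
    choose jx yx hx using hrep
    let g : ↑(Xtop J D) → (V →ₗ[ℂ] W) := fun x => f (jx x) (yx x)
    have key : ∀ (j : J) (y : ↑(D.obj j)), g (ιX J D j y) = f j y := by
      intro j y
      have heq : colimit.ι G (jx (ιX J D j y)) (yx (ιX J D j y)) = colimit.ι G j y :=
        hx (ιX J D j y)
      obtain ⟨k, φ, ψ, hφψ⟩ := Concrete.colimit_exists_of_rep_eq.{0} G _ _ heq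
      have h1 := hcomp _ k φ (yx (ιX J D j y))
      have h2 := hcomp _ k ψ y
      show f (jx (ιX J D j y)) (yx (ιX J D j y)) = f j y
      rw [← h1, ← h2]
      exact congrArg (f k) hφψ
    refine ⟨⟨fun p => g p.1 p.2, ?_, ?_⟩, ?_⟩
    · exact fun x => (g x).isLinear
    · intro v s
      show IsOpen ((fun x : ↑(colimit G) => g x v) ⁻¹' s)
      rw [TopCat.colimit_isOpen_iff]
      intro j
      have : (colimit.ι G j ⁻¹' ((fun x => g x v) ⁻¹' s))
          = (fun y : ↑(D.obj j) => f j y v) ⁻¹' s := by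
        ext y
        simp only [Set.mem_preimage]
        have : g (ιX J D j y) = f j y := key j y
        constructor <;> intro hy
        · rwa [show g (colimit.ι G j y) v = f j y v from congrArg (fun l : V →ₗ[ℂ] W => l v) this] at hy
        · rwa [show g (colimit.ι G j y) v = f j y v from congrArg (fun l : V →ₗ[ℂ] W => l v) this]
      rw [this]
      exact hlc j v s
    · apply Subtype.ext
      funext j x
      apply LinearMap.ext
      intro v
      simp only [restrictToLevels, IsLinearMap.mk'_apply]
      exact congrArg (fun l : V →ₗ[ℂ] W => l v) (key j x)

end
end

section
/- Let X_1 → X_2 be a morphism of locally compact objects of bSet. Then X_1 → X_2 is weakly surjective (i.e., for every set Y, the induced map Hom_{bSet}(X_2, Y) → Hom_{bSet}(X_1, Y) is injective) if and only if the corresponding continuous map X_1^top → X_2^top of locally compact totally disconnected Hausdorff spaces has dense image. -/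
/-!
Locally constant maps to a set `Y` are exactly the continuous maps to `Y` with the discrete
topology, which is Hausdorff; so two of them agreeing on a dense image agree everywhere.
Conversely, a locally compact totally disconnected Hausdorff space has a basis of clopen sets.
If the image of `φ` is not dense, it misses some nonempty clopen `U`, and the indicator of `U`
and the constant map `false` are distinct locally constant maps that agree on the image.
-/

universe u

open Set TopologicalSpace

theorem IsClopen.isLocallyConstant_boolIndicator {X : Type*} [TopologicalSpace X] {U : Set X}
    (hU : IsClopen U) : IsLocallyConstant U.boolIndicator :=
  (IsLocallyConstant.iff_continuous _).2 ((continuous_boolIndicator_iff_isClopen U).2 hU)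

theorem DenseRange.eq_of_isLocallyConstant {α X Y : Type*} [TopologicalSpace X] {φ : α → X}
    (hφ : DenseRange φ) {f g : X → Y} (hf : IsLocallyConstant f) (hg : IsLocallyConstant g)
    (hfg : f ∘ φ = g ∘ φ) : f = g :=
  letI : TopologicalSpace Y := ⊥
  haveI : DiscreteTopology Y := ⟨rfl⟩
  hφ.equalizer hf.continuous hg.continuous hfg

theorem dense_of_forall_isLocallyConstant_eqOn {X : Type*} [TopologicalSpace X]
    (hB : IsTopologicalBasis {U : Set X | IsClopen U}) {s : Set X}
    (h : ∀ f g : X → Bool, IsLocallyConstant f → IsLocallyConstant g → EqOn f g s → f = g) :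
    Dense s := by
  refine hB.dense_iff.2 fun U hU ⟨x, hx⟩ => by_contra fun hdisj => ?_
  have hU_false : U.boolIndicator = fun _ => false :=
    h _ _ hU.isLocallyConstant_boolIndicator (.const false) fun y hy =>
      (U.notMem_iff_boolIndicator y).1 fun hyU => hdisj ⟨y, hyU, hy⟩
  simpa [(U.mem_iff_boolIndicator x).1 hx] using congrFun hU_false x

theorem stmt_9_general {X₁ X₂ : Type u} [TopologicalSpace X₂]
    [LocallyCompactSpace X₂] [TotallyDisconnectedSpace X₂] [T2Space X₂]
    (φ : X₁ → X₂) :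
    (∀ (Y : Type u) (f g : X₂ → Y), IsLocallyConstant f → IsLocallyConstant g →
        f ∘ φ = g ∘ φ → f = g) ↔
      DenseRange φ := by
  refine ⟨fun h => ?_, fun hφ Y f g hf hg hfg => hφ.eq_of_isLocallyConstant hf hg hfg⟩
  refine dense_of_forall_isLocallyConstant_eqOn loc_compact_Haus_tot_disc_of_zero_dim
    fun f g hf hg hfg => ?_
  have hup : ULift.up.{u} ∘ f = ULift.up ∘ g :=
    h _ _ _ (hf.comp _) (hg.comp _) (funext fun x => congrArg ULift.up (hfg (mem_range_self x)))
  exact ULift.up_injective.comp_left hup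

theorem stmt_9 {X₁ X₂ : Type u} [TopologicalSpace X₁] [TopologicalSpace X₂]
    [LocallyCompactSpace X₁] [TotallyDisconnectedSpace X₁] [T2Space X₁]
    [LocallyCompactSpace X₂] [TotallyDisconnectedSpace X₂] [T2Space X₂]
    (φ : X₁ → X₂) (hφ : Continuous φ) :
    (∀ (Y : Type u) (f g : X₂ → Y), IsLocallyConstant f → IsLocallyConstant g →
        f ∘ φ = g ∘ φ → f = g) ↔
      DenseRange φ :=
  stmt_9_general φ
end

section
/- A map X_1 → X_2 in bSet is weakly surjective if and only if for all vector spaces V, W, the induced map CHom(X_2 ⊗ V, W) → CHom(X_1 ⊗ V, W) on action sets is injective. -/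
/-!
Restricting a pointwise locally constant family `x ↦ h x` of linear maps along `φ` only tests
the locally constant maps `x ↦ h x v`, so weak surjectivity forces injectivity on actions.
Conversely, a locally constant map `f : X₂ → Y` is encoded by the action
`x ↦ (c ↦ c • single (f x))` of `X₂` from the scalars into the free module on `Y`, from which
`f` can be read off again because `single` is injective.
-/

universe u v w

open Function

noncomputable def Finsupp.lsingleULift (R : Type v) [Semiring R] {Y : Type*} (y : Y) :
    ULift.{w} R →ₗ[R] (Y →₀ R) :=
  Finsupp.lsingle y ∘ₗ ULift.moduleEquiv.toLinearMap

theorem Finsupp.lsingleULift_injective (R : Type v) [Semiring R] [Nontrivial R] (Y : Type*) :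
    Injective (Finsupp.lsingleULift.{v, w} R : Y → _) := fun _ _ h =>
  Finsupp.single_left_injective one_ne_zero (LinearMap.congr_fun h ⟨1⟩)

section

variable {X₁ X₂ : Type*} [TopologicalSpace X₂] (φ : X₁ → X₂)

def WeaklySurjective : Prop :=
  ∀ (Y : Type w) (f g : X₂ → Y), IsLocallyConstant f → IsLocallyConstant g →
    f ∘ φ = g ∘ φ → f = g

variable {φ}

theorem WeaklySurjective.linearMap_ext {R V : Type*} {W : Type w} [Semiring R]
    [AddCommMonoid V] [Module R V] [AddCommMonoid W] [Module R W]
    (hφ : WeaklySurjective.{w} φ) {f g : X₂ → V →ₗ[R] W}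
    (hf : ∀ v, IsLocallyConstant fun x => f x v) (hg : ∀ v, IsLocallyConstant fun x => g x v)
    (hfg : ∀ x₁, f (φ x₁) = g (φ x₁)) : f = g :=
  funext fun x => LinearMap.ext fun v =>
    congrFun (hφ W _ _ (hf v) (hg v) (funext fun x₁ => LinearMap.congr_fun (hfg x₁) v)) x

theorem weaklySurjective_of_forall_linearMap_ext (R : Type v) [Semiring R] [Nontrivial R]
    (H : ∀ (Y : Type w) (f g : X₂ → ULift.{w} R →ₗ[R] (Y →₀ R)),
      (∀ c, IsLocallyConstant fun x => f x c) → (∀ c, IsLocallyConstant fun x => g x c) →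
        (∀ x₁, f (φ x₁) = g (φ x₁)) → f = g) :
    WeaklySurjective.{w} φ := by
  intro Y f g hf hg hfg
  have hsingle := Finsupp.lsingleULift_injective.{v, w} R Y
  refine hsingle.comp_left (H Y _ _ (fun c => ?_) (fun c => ?_) fun x₁ => ?_)
  · exact hf.comp fun y => Finsupp.lsingleULift R y c
  · exact hg.comp fun y => Finsupp.lsingleULift R y c
  · exact congrArg (Finsupp.lsingleULift R) (congrFun hfg x₁)

end

theorem stmt_10_general {X₁ X₂ : Type u} [TopologicalSpace X₂]
    (φ : X₁ → X₂) :
    (∀ (Y : Type u) (f g : X₂ → Y), IsLocallyConstant f → IsLocallyConstant g →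
        f ∘ φ = g ∘ φ → f = g) ↔
      (∀ (V W : Type u) [AddCommGroup V] [Module ℂ V] [AddCommGroup W] [Module ℂ W],
        ∀ f g : {h : X₂ → V →ₗ[ℂ] W // ∀ v : V, IsLocallyConstant fun x => h x v},
          (∀ x₁ : X₁, f.1 (φ x₁) = g.1 (φ x₁)) → f = g) := by
  constructor
  · intro hφ V W _ _ _ _ f g hfg
    exact Subtype.ext (WeaklySurjective.linearMap_ext hφ f.2 g.2 hfg)
  · intro H
    exact weaklySurjective_of_forall_linearMap_ext ℂ fun Y f g hf hg hfg =>
      congrArg Subtype.val (H _ _ ⟨f, hf⟩ ⟨g, hg⟩ hfg)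

theorem stmt_10 {X₁ X₂ : Type u} [TopologicalSpace X₁] [TopologicalSpace X₂]
    [LocallyCompactSpace X₁] [TotallyDisconnectedSpace X₁] [T2Space X₁]
    [LocallyCompactSpace X₂] [TotallyDisconnectedSpace X₂] [T2Space X₂]
    (φ : X₁ → X₂) (hφ : Continuous φ) :
    (∀ (Y : Type u) (f g : X₂ → Y), IsLocallyConstant f → IsLocallyConstant g →
        f ∘ φ = g ∘ φ → f = g) ↔
      (∀ (V W : Type u) [AddCommGroup V] [Module ℂ V] [AddCommGroup W] [Module ℂ W],
        ∀ f g : {h : X₂ → V →ₗ[ℂ] W // ∀ v : V, IsLocallyConstant fun x => h x v},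
          (∀ x₁ : X₁, f.1 (φ x₁) = g.1 (φ x₁)) → f = g) :=
  stmt_10_general φ
end

section
/- Let G be a split, semi-simple, simply-connected algebraic group over a local field K, and F = K((t)). Then every representation of the group-object 𝔾 (associated to G((t))) on an object of Vect (an honest vector space, rather than a pro-vector space) is trivial: the abstract group G(F) acts trivially on the underlying vector space. -/
/-!
STATEMENT 16: Let `G` be a split, semi-simple, simply-connected group over a local field `K` and
`F = K((t))`.  Every representation of the group-object `𝔾` on an honest vector space (rather
than a pro-vector space) is trivial.  Being a representation of `𝔾` means in particular that the
kernel of the abstract action of `G(F)` contains a congruence subgroup `G^i(K)`; the conclusion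
is that the abstract group `G(F)` acts trivially.  We instantiate the split semi-simple
simply-connected group as `SL_n`, with `F = K((t))` realized as `LaurentSeries K`; the congruence
subgroup of level `i` consists of the matrices `g` with `g ≡ 1 mod t^i` (in particular all
entries of `g` are integral, i.e. lie in `K[[t]]`).
-/

open scoped Matrix

open Matrix

section Aux

variable {𝕜 : Type} [Field 𝕜] {N : Type} [Fintype N] [DecidableEq N]

private lemma hmat_aux {i j : N} (hij : i ≠ j) (a b : 𝕜) (hab : a * b = 1) :
    transvection i j a * transvection j i (-b) * transvection i j a *
      (transvection i j (-1) * transvection j i 1 * transvection i j (-1)) =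
    1 + (a - 1) • Matrix.single i i (1:𝕜) + (b - 1) • Matrix.single j j (1:𝕜) := by
  have tv : ∀ (k l : N) (c : 𝕜), transvection k l c = 1 + c • Matrix.single k l (1:𝕜) := by
    intro k l c
    rw [Matrix.transvection, Matrix.smul_single, smul_eq_mul, mul_one]
  have m1 : ∀ (c d : 𝕜), (single i j c : Matrix N N 𝕜) * single i j d = 0 :=
    fun c d => Matrix.single_mul_single_of_ne _ _ _ _ hij.symm _
  have m2 : ∀ (c d : 𝕜), (single j i c : Matrix N N 𝕜) * single j i d = 0 :=
    fun c d => Matrix.single_mul_single_of_ne _ _ _ _ hij _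
  have m3 : ∀ (c d : 𝕜), (single i i c : Matrix N N 𝕜) * single j j d = 0 :=
    fun c d => Matrix.single_mul_single_of_ne _ _ _ _ hij _
  have m4 : ∀ (c d : 𝕜), (single j j c : Matrix N N 𝕜) * single i i d = 0 :=
    fun c d => Matrix.single_mul_single_of_ne _ _ _ _ hij.symm _
  have m5 : ∀ (c d : 𝕜), (single i i c : Matrix N N 𝕜) * single j i d = 0 :=
    fun c d => Matrix.single_mul_single_of_ne _ _ _ _ hij _
  have m6 : ∀ (c d : 𝕜), (single j j c : Matrix N N 𝕜) * single i j d = 0 :=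
    fun c d => Matrix.single_mul_single_of_ne _ _ _ _ hij.symm _
  have m7 : ∀ (c d : 𝕜), (single i j c : Matrix N N 𝕜) * single i i d = 0 :=
    fun c d => Matrix.single_mul_single_of_ne _ _ _ _ hij.symm _
  have m8 : ∀ (c d : 𝕜), (single j i c : Matrix N N 𝕜) * single j j d = 0 :=
    fun c d => Matrix.single_mul_single_of_ne _ _ _ _ hij _
  simp only [tv, mul_add, add_mul, one_mul, mul_one, smul_mul_assoc, mul_smul_comm, smul_smul,
    Matrix.single_mul_single_same, m1, m2, m3, m4, m5, m6, m7, m8, smul_zero, add_zero, zero_add]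
  match_scalars <;>
    first
      | ring1
      | linear_combination (1 + a + b) * hab
      | linear_combination (2 + a + b) * hab
      | linear_combination (a + b) * hab
      | linear_combination (1 + b) * hab
      | linear_combination hab
      | linear_combination -hab
      | linear_combination (-a) * hab
      | linear_combination a * hab
      | linear_combination (-b) * hab
      | linear_combination b * hab

private lemma diag_eq_aux {i j : N} (hij : i ≠ j) (a b : 𝕜) :
    (1 : Matrix N N 𝕜) + (a - 1) • Matrix.single i i (1:𝕜)
        + (b - 1) • Matrix.single j j (1:𝕜) =
      Matrix.diagonal (fun k => if k = i then a else if k = j then b else 1) := by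
  ext p q
  by_cases hpq : p = q
  · subst hpq
    by_cases hpi : p = i
    · subst hpi
      simp [Matrix.single, Matrix.one_apply, hij, Ne.symm hij]
    · by_cases hpj : p = j
      · subst hpj
        simp [Matrix.single, Matrix.one_apply, hpi, Ne.symm hpi]
      · simp [Matrix.single, Matrix.one_apply, hpi, hpj, Ne.symm hpi, Ne.symm hpj]
  · simp only [Matrix.add_apply, Matrix.smul_apply, Matrix.one_apply_ne hpq,
      Matrix.diagonal_apply_ne _ hpq, Matrix.single]
    have h1 : ¬(i = p ∧ i = q) := by rintro ⟨rfl, rfl⟩; exact hpq rfl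
    have h2 : ¬(j = p ∧ j = q) := by rintro ⟨rfl, rfl⟩; exact hpq rfl
    simp only [Matrix.of_apply]
    rw [if_neg h1, if_neg h2]
    simp

private lemma det_diag_pair_aux {i j : N} (hij : i ≠ j) (a b : 𝕜) :
    Matrix.det (Matrix.diagonal (fun k => if k = i then a else if k = j then b else 1)) = a * b := by
  rw [Matrix.det_diagonal, ← Finset.prod_sdiff (Finset.subset_univ {i, j})]
  have h1 : ∏ k ∈ Finset.univ \ {i, j},
      (if k = i then a else if k = j then b else 1) = 1 := by
    apply Finset.prod_eq_one
    intro k hk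
    simp only [Finset.mem_sdiff, Finset.mem_insert, Finset.mem_singleton, not_or] at hk
    rw [if_neg hk.2.1, if_neg hk.2.2]
  have h2 : ∏ k ∈ ({i, j} : Finset N),
      (if k = i then a else if k = j then b else 1) = a * b := by
    rw [Finset.prod_pair hij, if_pos rfl, if_neg hij.symm, if_pos rfl]
  rw [h1, h2, one_mul]

private lemma diag_sbm_aux (f : N → 𝕜) (i j : N) (c : 𝕜) :
    Matrix.diagonal f * Matrix.single i j c = Matrix.single i j (f i * c) := by
  ext p q
  rw [Matrix.diagonal_mul]
  by_cases h : i = p ∧ j = q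
  · obtain ⟨rfl, rfl⟩ := h; simp
  · rw [Matrix.single_apply_of_ne _ _ _ _ _ h, Matrix.single_apply_of_ne _ _ _ _ _ h,
      mul_zero]

private lemma sbm_diag_aux (f : N → 𝕜) (i j : N) (c : 𝕜) :
    Matrix.single i j c * Matrix.diagonal f = Matrix.single i j (c * f j) := by
  ext p q
  rw [Matrix.mul_diagonal]
  by_cases h : i = p ∧ j = q
  · obtain ⟨rfl, rfl⟩ := h; simp
  · rw [Matrix.single_apply_of_ne _ _ _ _ _ h, Matrix.single_apply_of_ne _ _ _ _ _ h,
      zero_mul]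

private lemma diag_transvection_conj_aux {i j : N} (f g : N → 𝕜) (c : 𝕜)
    (hfg : ∀ k, f k * g k = 1) :
    Matrix.diagonal f * transvection i j c * Matrix.diagonal g =
      transvection i j (f i * c * g j) := by
  have h1 : Matrix.diagonal f * Matrix.diagonal g = 1 := by
    rw [Matrix.diagonal_mul_diagonal,
      show (fun k => f k * g k) = fun _ => (1:𝕜) from funext hfg, Matrix.diagonal_one]
  rw [Matrix.transvection, Matrix.transvection, mul_add, add_mul, mul_one, h1]
  congr 1
  rw [diag_sbm_aux, sbm_diag_aux]

end Aux

theorem stmt_16 (K : Type) [Field K] (n : ℕ) (V : Type) [AddCommGroup V] [Module ℂ V]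
    (ρ : Representation ℂ (Matrix.SpecialLinearGroup (Fin n) (LaurentSeries K)) V)
    -- the kernel of the action contains a congruence subgroup `G^i(K)`, `i ≥ 1`:
    (hker : ∃ i : ℕ, 1 ≤ i ∧
      ∀ g : Matrix.SpecialLinearGroup (Fin n) (LaurentSeries K),
        (∀ (a b : Fin n) (m : ℤ), m < (i : ℤ) →
          ((g : Matrix (Fin n) (Fin n) (LaurentSeries K)) a b -
            (1 : Matrix (Fin n) (Fin n) (LaurentSeries K)) a b).coeff m = 0) →
        ρ g = 1) :
    -- then the whole group acts trivially:
    ∀ g : Matrix.SpecialLinearGroup (Fin n) (LaurentSeries K), ρ g = 1 := by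
  obtain ⟨m, hm1, hK⟩ := hker
  -- the "kernel" subgroup
  let S : Subgroup (Matrix.SpecialLinearGroup (Fin n) (LaurentSeries K)) :=
    { carrier := {g | ρ g = 1}
      one_mem' := by simp [Set.mem_setOf_eq, _root_.map_one]
      mul_mem' := by
        intro a b ha hb
        simp only [Set.mem_setOf_eq, _root_.map_mul] at *
        rw [ha, hb, mul_one]
      inv_mem' := by
        intro a ha
        simp only [Set.mem_setOf_eq] at *
        have h : ρ a⁻¹ * ρ a = 1 := by rw [← _root_.map_mul, inv_mul_cancel, _root_.map_one]
        calc ρ a⁻¹ = ρ a⁻¹ * ρ a := by rw [ha, mul_one]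
          _ = 1 := h }
  have hmem : ∀ g : Matrix.SpecialLinearGroup (Fin n) (LaurentSeries K), g ∈ S ↔ ρ g = 1 := fun _ => Iff.rfl
  -- Step A : all transvections are in S
  have stepA : ∀ (g : Matrix.SpecialLinearGroup (Fin n) (LaurentSeries K)) (i j : Fin n), i ≠ j → ∀ c : LaurentSeries K,
      (g : Matrix (Fin n) (Fin n) (LaurentSeries K)) = transvection i j c → g ∈ S := by
    intro g i j hij c hg
    by_cases hc : c = 0
    · have hg1 : g = 1 := Subtype.ext (by
        rw [hg, hc, Matrix.transvection_zero, Matrix.SpecialLinearGroup.coe_one])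
      rw [hg1]
      exact S.one_mem
    · set N : ℤ := max 0 ((m:ℤ) - c.order) with hN
      have hN0 : 0 ≤ N := le_max_left _ _
      have hN1 : (m:ℤ) - c.order ≤ N := le_max_right _ _
      set u : LaurentSeries K := HahnSeries.single N (1:K) with hu
      set v : LaurentSeries K := HahnSeries.single (-N) (1:K) with hv
      have huv : u * v = 1 := by
        rw [hu, hv, HahnSeries.single_mul_single, add_neg_cancel, one_mul,
          HahnSeries.single_zero_one]
      have hvu : v * u = 1 := by rw [mul_comm]; exact huv
      set f : Fin n → LaurentSeries K := fun k => if k = i then u else if k = j then v else 1 with hfdef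
      set f' : Fin n → LaurentSeries K := fun k => if k = i then v else if k = j then u else 1 with hf'def
      have hff' : ∀ k, f k * f' k = 1 := by
        intro k
        by_cases hki : k = i
        · subst hki; simp [hfdef, hf'def, huv]
        · by_cases hkj : k = j
          · subst hkj; simp [hfdef, hf'def, Ne.symm hij, hvu]
          · simp [hfdef, hf'def, hki, hkj]
      have hf'f : ∀ k, f' k * f k = 1 := fun k => by rw [mul_comm]; exact hff' k
      have hdetf : Matrix.det (Matrix.diagonal f) = 1 := by
        rw [hfdef, det_diag_pair_aux hij, huv]
      have hdetf' : Matrix.det (Matrix.diagonal f') = 1 := by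
        rw [hf'def, det_diag_pair_aux hij, hvu]
      set d : Matrix.SpecialLinearGroup (Fin n) (LaurentSeries K) := ⟨Matrix.diagonal f, hdetf⟩ with hd
      set d' : Matrix.SpecialLinearGroup (Fin n) (LaurentSeries K) := ⟨Matrix.diagonal f', hdetf'⟩ with hd'
      have hd'd : d' * d = 1 := Subtype.ext (by
        rw [Matrix.SpecialLinearGroup.coe_mul, hd, hd']
        show Matrix.diagonal f' * Matrix.diagonal f = _
        rw [Matrix.diagonal_mul_diagonal,
          show (fun k => f' k * f k) = fun _ => (1:LaurentSeries K) from funext hf'f,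
          Matrix.diagonal_one, Matrix.SpecialLinearGroup.coe_one])
      set cc : LaurentSeries K := f i * c * f' j with hcc
      have hconjcoe : ((d * g * d' : Matrix.SpecialLinearGroup (Fin n) (LaurentSeries K)) :
          Matrix (Fin n) (Fin n) (LaurentSeries K)) = transvection i j cc := by
        rw [Matrix.SpecialLinearGroup.coe_mul, Matrix.SpecialLinearGroup.coe_mul, hg]
        exact diag_transvection_conj_aux f f' c hff'
      have hfi : f i = u := by simp [hfdef]
      have hf'j : f' j = u := by simp [hf'def, Ne.symm hij]
      have hcoeff : ∀ x : ℤ, x < (m:ℤ) → cc.coeff x = 0 := by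
        intro x hx
        have hccval : cc = u * (c * u) := by rw [hcc, hfi, hf'j, mul_assoc]
        have e1 : (u * (c * u)).coeff ((x - N) + N) = (c * u).coeff (x - N) := by
          rw [hu, HahnSeries.coeff_single_mul_add, one_mul]
        have e2 : (c * u).coeff ((x - 2*N) + N) = c.coeff (x - 2*N) := by
          rw [hu, HahnSeries.coeff_mul_single_add, mul_one]
        have e3 : cc.coeff x = c.coeff (x - 2*N) := by
          rw [hccval]
          conv_lhs => rw [show x = (x - N) + N by ring]
          rw [e1]
          conv_lhs => rw [show x - N = (x - 2*N) + N by ring]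
          rw [e2]
        rw [e3]
        apply HahnSeries.coeff_eq_zero_of_lt_orderTop
        rw [← HahnSeries.order_eq_orderTop_of_ne_zero hc]
        have hlt : x - 2*N < c.order := by omega
        exact_mod_cast hlt
      have hgS : ρ (d * g * d') = 1 := by
        apply hK
        intro a b x hx
        rw [hconjcoe]
        by_cases hab : i = a ∧ j = b
        · obtain ⟨rfl, rfl⟩ := hab
          have he : transvection i j cc i j - (1 : Matrix (Fin n) (Fin n) (LaurentSeries K)) i j
              = cc := by
            rw [Matrix.transvection, Matrix.add_apply, Matrix.single_apply_same]
            ring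
          rw [he]
          exact hcoeff x hx
        · have he : transvection i j cc a b - (1 : Matrix (Fin n) (Fin n) (LaurentSeries K)) a b
              = 0 := by
            rw [Matrix.transvection, Matrix.add_apply, Matrix.single_apply_of_ne _ _ _ _ _ hab]
            ring
          rw [he, HahnSeries.coeff_zero]
      show ρ g = 1
      have hgd : g = d' * (d * g * d') * d := by
        have h1 : d' * (d * g * d') * d = (d' * d) * g * (d' * d) := by group
        rw [h1, hd'd, one_mul, mul_one]
      rw [hgd, _root_.map_mul, _root_.map_mul, hgS, mul_one, ← _root_.map_mul, hd'd, _root_.map_one]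
  -- Step B : diagonal matrices of determinant one are in S
  have stepB : ∀ (mm : ℕ) (D : Fin n → LaurentSeries K), (∏ k, D k) = 1 →
      (∀ l : Fin n, mm ≤ (l:ℕ) → D l = 1) →
      ∀ (hdet : Matrix.det (Matrix.diagonal D) = 1),
        (⟨Matrix.diagonal D, hdet⟩ : Matrix.SpecialLinearGroup (Fin n) (LaurentSeries K)) ∈ S := by
    intro mm
    induction mm with
    | zero =>
      intro D hD htriv hdet
      have hD1 : D = fun _ => 1 := funext fun l => htriv l (Nat.zero_le _)
      have : (⟨Matrix.diagonal D, hdet⟩ :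
          Matrix.SpecialLinearGroup (Fin n) (LaurentSeries K)) = (1 : Matrix.SpecialLinearGroup (Fin n) (LaurentSeries K)) := by
        apply Subtype.ext
        rw [Matrix.SpecialLinearGroup.coe_one]
        show Matrix.diagonal D = 1
        rw [hD1, Matrix.diagonal_one]
      rw [this]
      exact S.one_mem
    | succ mm ih =>
      intro D hD htriv hdet
      by_cases hmn : n ≤ mm
      · exact ih D hD (fun l hl => absurd l.isLt (by omega)) hdet
      · push_neg at hmn
        rcases Nat.eq_zero_or_pos mm with h0 | hpos
        · subst h0
          have hn0 : 0 < n := hmn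
          have hD0 : D ⟨0, hn0⟩ = 1 := by
            have hp := Finset.prod_eq_single (M := LaurentSeries K) (⟨0, hn0⟩ : Fin n)
              (fun b _ hb => htriv b (by
                have hbv : (b : ℕ) ≠ 0 := fun h => hb (Fin.ext h)
                omega))
              (fun h => absurd (Finset.mem_univ _) h)
            rw [← hp, hD]
          have hD1 : D = fun _ => 1 := funext fun l => by
            by_cases hl0 : (l : ℕ) = 0
            · have : l = ⟨0, hn0⟩ := Fin.ext hl0
              rw [this]; exact hD0
            · exact htriv l (by omega)
          have : (⟨Matrix.diagonal D, hdet⟩ :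
              Matrix.SpecialLinearGroup (Fin n) (LaurentSeries K)) = (1 : Matrix.SpecialLinearGroup (Fin n) (LaurentSeries K)) := by
            apply Subtype.ext
            rw [Matrix.SpecialLinearGroup.coe_one]
            show Matrix.diagonal D = 1
            rw [hD1, Matrix.diagonal_one]
          rw [this]
          exact S.one_mem
        · set i : Fin n := ⟨mm, hmn⟩ with hidef
          set j : Fin n := ⟨mm - 1, by omega⟩ with hjdef
          have hij : i ≠ j := by
            intro h
            have := congrArg Fin.val h
            simp only [hidef, hjdef] at this
            omega
          set a : LaurentSeries K := D i with hadef
          have ha : a ≠ 0 := by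
            intro h0
            have hz : (∏ k, D k) = 0 :=
              Finset.prod_eq_zero (Finset.mem_univ i) (by rw [← hadef, h0])
            rw [hD] at hz
            exact one_ne_zero hz
          have hab : a * a⁻¹ = 1 := mul_inv_cancel₀ ha
          set D' : Fin n → LaurentSeries K :=
            Function.update (Function.update D i 1) j (a * D j) with hD'def
          have hupd : ∀ (E : Fin n → LaurentSeries K) (k : Fin n) (x : LaurentSeries K),
              ∏ l, Function.update E k x l = x * ∏ l ∈ Finset.univ.erase k, E l := by
            intro E k x
            rw [Finset.prod_update_of_mem (Finset.mem_univ k), Finset.sdiff_singleton_eq_erase]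
          have hupd2 : ∀ (E : Fin n → LaurentSeries K) (x : LaurentSeries K),
              ∏ l ∈ Finset.univ.erase j, Function.update E i x l =
                x * ∏ l ∈ (Finset.univ.erase j).erase i, E l := by
            intro E x
            rw [Finset.prod_update_of_mem (Finset.mem_erase.mpr ⟨hij, Finset.mem_univ i⟩),
              Finset.sdiff_singleton_eq_erase]
          have hprodD : D j * (a * ∏ l ∈ (Finset.univ.erase j).erase i, D l) = 1 := by
            rw [hadef]
            rw [Finset.mul_prod_erase (Finset.univ.erase j) D
              (Finset.mem_erase.mpr ⟨hij, Finset.mem_univ i⟩)]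
            rw [Finset.mul_prod_erase Finset.univ D (Finset.mem_univ j)]
            exact hD
          have hprodD' : ∏ k, D' k = 1 := by
            rw [hD'def, hupd, hupd2, one_mul]
            calc a * D j * ∏ l ∈ (Finset.univ.erase j).erase i, D l
                = D j * (a * ∏ l ∈ (Finset.univ.erase j).erase i, D l) := by ring
              _ = 1 := hprodD
          have htriv' : ∀ l : Fin n, mm ≤ (l:ℕ) → D' l = 1 := by
            intro l hl
            have hlj : l ≠ j := by
              intro h
              have := congrArg Fin.val h
              simp only [hjdef] at this
              omega
            by_cases hli : l = i
            · rw [hD'def, Function.update_of_ne hlj, hli, Function.update_self]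
            · have hlval : mm + 1 ≤ (l : ℕ) := by
                rcases Nat.lt_or_ge (l : ℕ) (mm + 1) with h | h
                · exfalso
                  apply hli
                  apply Fin.ext
                  simp only [hidef]
                  omega
                · exact h
              rw [hD'def, Function.update_of_ne hlj, Function.update_of_ne hli]
              exact htriv l hlval
          have hdet' : Matrix.det (Matrix.diagonal D') = 1 := by
            rw [Matrix.det_diagonal]
            exact hprodD'
          have hmem' := ih D' hprodD' htriv' hdet'
          -- the torus element as a product of transvections
          set f : Fin n → LaurentSeries K :=
            fun k => if k = i then a else if k = j then a⁻¹ else 1 with hfdef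
          have hdetH : Matrix.det (Matrix.diagonal f) = 1 := by
            rw [hfdef, det_diag_pair_aux hij, hab]
          set HS : Matrix.SpecialLinearGroup (Fin n) (LaurentSeries K) :=
            ⟨Matrix.diagonal f, hdetH⟩ with hHS
          have hHmem : HS ∈ S := by
            set T1 : Matrix.SpecialLinearGroup (Fin n) (LaurentSeries K) :=
              ⟨transvection i j a, Matrix.det_transvection_of_ne i j hij a⟩
            set T2 : Matrix.SpecialLinearGroup (Fin n) (LaurentSeries K) :=
              ⟨transvection j i (-a⁻¹), Matrix.det_transvection_of_ne j i hij.symm _⟩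
            set T3 : Matrix.SpecialLinearGroup (Fin n) (LaurentSeries K) :=
              ⟨transvection i j (-1), Matrix.det_transvection_of_ne i j hij _⟩
            set T4 : Matrix.SpecialLinearGroup (Fin n) (LaurentSeries K) :=
              ⟨transvection j i 1, Matrix.det_transvection_of_ne j i hij.symm _⟩
            have hprod : HS = T1 * T2 * T1 * (T3 * T4 * T3) := by
              apply Subtype.ext
              show Matrix.diagonal f =
                transvection i j a * transvection j i (-a⁻¹) * transvection i j a *
                  (transvection i j (-1) * transvection j i 1 * transvection i j (-1))
              rw [hmat_aux hij a a⁻¹ hab, diag_eq_aux hij, hfdef]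
            rw [hprod]
            have h1 : T1 ∈ S := stepA T1 i j hij a rfl
            have h2 : T2 ∈ S := stepA T2 j i hij.symm (-a⁻¹) rfl
            have h3 : T3 ∈ S := stepA T3 i j hij (-1) rfl
            have h4 : T4 ∈ S := stepA T4 j i hij.symm 1 rfl
            exact S.mul_mem (S.mul_mem (S.mul_mem h1 h2) h1)
              (S.mul_mem (S.mul_mem h3 h4) h3)
          have hsplit : (⟨Matrix.diagonal D, hdet⟩ :
              Matrix.SpecialLinearGroup (Fin n) (LaurentSeries K)) =
              HS * ⟨Matrix.diagonal D', hdet'⟩ := by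
            apply Subtype.ext
            simp only [Matrix.SpecialLinearGroup.coe_mul]
            show Matrix.diagonal D = Matrix.diagonal f * Matrix.diagonal D'
            rw [Matrix.diagonal_mul_diagonal]
            refine congrArg Matrix.diagonal (funext fun k => ?_)
            show D k = f k * D' k
            by_cases hki : k = i
            · subst hki
              have e1 : f i = a := by
                rw [hfdef]
                simp
              have e2 : D' i = 1 := by
                rw [hD'def, Function.update_of_ne hij, Function.update_self]
              rw [e1, e2, mul_one, hadef]
            · by_cases hkj : k = j
              · subst hkj
                have e1 : f j = a⁻¹ := by
                  rw [hfdef]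
                  simp [Ne.symm hij]
                have e2 : D' j = a * D j := by rw [hD'def, Function.update_self]
                rw [e1, e2, ← mul_assoc, inv_mul_cancel₀ ha, one_mul]
              · have e1 : f k = 1 := by
                  rw [hfdef]
                  simp [hki, hkj]
                have e2 : D' k = D k := by
                  rw [hD'def, Function.update_of_ne hkj, Function.update_of_ne hki]
                rw [e1, e2, one_mul]
          rw [hsplit]
          exact S.mul_mem hHmem hmem'
  -- Step C : decomposition of an arbitrary element
  intro g
  obtain ⟨L, L', D, hdecomp⟩ :=
    Matrix.Pivot.exists_list_transvec_mul_diagonal_mul_list_transvec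
      (g : Matrix (Fin n) (Fin n) (LaurentSeries K))
  have hdetD : Matrix.det (Matrix.diagonal D) = 1 := by
    have h1 : Matrix.det (g : Matrix (Fin n) (Fin n) (LaurentSeries K)) = 1 :=
      g.2
    rw [hdecomp, Matrix.det_mul, Matrix.det_mul,
      Matrix.TransvectionStruct.det_toMatrix_prod, Matrix.TransvectionStruct.det_toMatrix_prod]
      at h1
    rw [← h1]
    ring
  set tSL : Matrix.TransvectionStruct (Fin n) (LaurentSeries K) →
      Matrix.SpecialLinearGroup (Fin n) (LaurentSeries K) :=
    fun t => ⟨t.toMatrix, t.det⟩ with htSL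
  have hcoeprod : ∀ (M : List (Matrix.TransvectionStruct (Fin n) (LaurentSeries K))),
      (((M.map tSL).prod : Matrix.SpecialLinearGroup (Fin n) (LaurentSeries K)) :
        Matrix (Fin n) (Fin n) (LaurentSeries K)) =
        (M.map Matrix.TransvectionStruct.toMatrix).prod := by
    intro M
    induction M with
    | nil => simp
    | cons t M ihM =>
      simp only [List.map_cons, List.prod_cons, Matrix.SpecialLinearGroup.coe_mul, ihM]
      rfl
  have hmemprod : ∀ (M : List (Matrix.TransvectionStruct (Fin n) (LaurentSeries K))),
      (M.map tSL).prod ∈ S := by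
    intro M
    apply Subgroup.list_prod_mem
    intro x hx
    rw [List.mem_map] at hx
    obtain ⟨t, _, rfl⟩ := hx
    exact stepA (tSL t) t.i t.j t.hij t.c rfl
  have hgsplit : g = (L.map tSL).prod * ⟨Matrix.diagonal D, hdetD⟩ * (L'.map tSL).prod := by
    apply Subtype.ext
    simp only [Matrix.SpecialLinearGroup.coe_mul, hcoeprod]
    rw [hdecomp, ← hcoeprod L]
    rfl
  have hgmem : g ∈ S := by
    rw [hgsplit]
    refine S.mul_mem (S.mul_mem (hmemprod L) ?_) (hmemprod L')
    exact stepB n D (by rwa [Matrix.det_diagonal] at hdetD)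
      (fun l hl => absurd l.isLt (by omega)) hdetD
  exact hgmem
end

section
/- Let G be a split semi-simple simply-connected group over a local field K and F = K((t)). Every representation of the group-object 𝔾 on an object of Ind(Vect) is trivial. More precisely, in the rank-one reduction: let B = G_a ⋊ G_m ⊂ SL_2 over K, acting on V = colim V_l ∈ Ind(Vect) via an action map in the sense of the pseudo-action of BSet on Ind(Vect); then the subgroup N(F) = K((t)) acts trivially on V. -/
/-!
STATEMENT 17: Let `G` be a split semi-simple simply-connected group over a local field `K` and
`F = K((t))`.  Every representation of the group-object `𝔾` on an object of `Ind(Vect)` is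
trivial.  Rank-one reduction: let `B = G_a ⋊ G_m ⊂ SL₂` over `K` (with `G_m` acting on `G_a` by
the square of the standard character) act on `V = colim V_l ∈ Ind(Vect)` via an action map in
the sense of the pseudo-action of `BSet` on `Ind(Vect)`; then `N(F) = K((t))` acts trivially.

We take `K = ℚ_p`, `F = K((t)) = LaurentSeries ℚ_[p]`.  The `B`-action is encoded by a
representation `ρN` of the additive group `F` (the group `N(F)`), a representation `ρT` of `Fˣ`
(the group `G_m(F)`), and the semidirect-product relation `a·n·a⁻¹ = a²n`.  The ind-structure of
`V` is an exhaustive directed family of subspaces `V_l`, and the finite-level factorization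
properties of the pseudo-action give:  (h1) for each `l` the action of `N(F)` on `V_l` factors
through a finite level, so the congruence subgroup `N^i(K) = t^i·K[[t]]` acts trivially on `V_l`
for some `i`;  (h2) similarly some congruence subgroup `(G_m)^j(K) = 1 + t^j·K[[t]]` of `Fˣ`
acts trivially on `V_l`;  (h3) local constancy in the `K`-direction: for every vector `v` and
every `i'`, some `t^{i'}·p^k·O_K[[t]]` acts trivially on `v`.  The conclusion is that `N(F)`
acts trivially on all of `V`.
-/

open Multiplicative

theorem stmt_17 (p : ℕ) [Fact p.Prime]
    (Vc : Type) [AddCommGroup Vc] [Module ℂ Vc]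
    (ι : Type) [Preorder ι] [IsDirected ι (· ≤ ·)] [Nonempty ι]
    (Vl : ι → Submodule ℂ Vc) (hmono : Monotone Vl) (hexh : ∀ v : Vc, ∃ l, v ∈ Vl l)
    (ρN : Representation ℂ (Multiplicative (LaurentSeries ℚ_[p])) Vc)
    (ρT : Representation ℂ (LaurentSeries ℚ_[p])ˣ Vc)
    -- the semidirect product relation in `B = G_a ⋊ G_m`, `G_m` acting by the square of the
    -- standard character:
    (hrel : ∀ (a : (LaurentSeries ℚ_[p])ˣ) (x : LaurentSeries ℚ_[p]),
      ρT a * ρN (ofAdd x) * ρT a⁻¹ = ρN (ofAdd ((a : LaurentSeries ℚ_[p]) ^ 2 * x)))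
    -- (h1): the action of `N(F)` on each `V_l` factors through a finite level:
    (h1 : ∀ l : ι, ∃ i : ℤ, ∀ x : LaurentSeries ℚ_[p],
      (∀ m : ℤ, m < i → x.coeff m = 0) → ∀ v ∈ Vl l, ρN (ofAdd x) v = v)
    -- (h2): the action of `G_m(F)` on each `V_l` factors through a finite level:
    (h2 : ∀ l : ι, ∃ j : ℕ, 1 ≤ j ∧ ∀ a : (LaurentSeries ℚ_[p])ˣ,
      (∀ m : ℤ, m < (j : ℤ) → ((a : LaurentSeries ℚ_[p]) - 1).coeff m = 0) →
      ∀ v ∈ Vl l, ρT a v = v)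
    -- (h3): local constancy in the `K`-direction: every vector is fixed by
    -- `t^{i'}·p^k·O_K[[t]]` for some `k`:
    (h3 : ∀ (v : Vc) (i' : ℤ), ∃ k : ℕ, ∀ x : LaurentSeries ℚ_[p],
      (∀ m : ℤ, m < i' → x.coeff m = 0) →
      (∀ m : ℤ, ‖x.coeff m‖ ≤ (p : ℝ) ^ (-(k : ℤ))) →
      ρN (ofAdd x) v = v) :
    -- then `N(F)` acts trivially:
    ∀ (x : LaurentSeries ℚ_[p]) (v : Vc), ρN (ofAdd x) v = v := by
  have hp : p.Prime := Fact.out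
  have hpQ : (p : ℚ_[p]) ≠ 0 := by
    exact_mod_cast hp.ne_zero
  intro x v
  obtain ⟨l, hvl⟩ := hexh v
  obtain ⟨i, hi⟩ := h1 l
  obtain ⟨j, hj1, hj⟩ := h2 l
  have key : ∀ n : ℕ, ∀ x : LaurentSeries ℚ_[p],
      (∀ m : ℤ, m < i - n → x.coeff m = 0) → ρN (ofAdd x) v = v := by
    intro n
    induction n with
    | zero =>
        intro x hx
        exact hi x (by intro m hm; exact hx m (by simpa using hm)) v hvl
    | succ n IH =>
        intro x hx
        set d : ℤ := i - (n + 1 : ℕ) with hd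
        have hj1Z : (1 : ℤ) ≤ (j : ℤ) := by exact_mod_cast hj1
        obtain ⟨k, hk⟩ := h3 v (d - 2 * j)
        set ξ : ℚ_[p] := x.coeff d with hξ
        set η : ℚ_[p] := ξ / 2 with hη
        obtain ⟨N, hN⟩ := exists_nat_gt ‖η‖
        set M : ℕ := N + k with hM
        set c : ℚ_[p] := (p : ℚ_[p]) ^ (-(M : ℤ)) with hc
        set b : ℚ_[p] := η * (p : ℚ_[p]) ^ (M : ℤ) with hb
        have h2Q : (2 : ℚ_[p]) ≠ 0 := by norm_num
        have hpM : (p : ℚ_[p]) ^ (-(M : ℤ)) * (p : ℚ_[p]) ^ (M : ℤ) = 1 := by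
          rw [← zpow_add₀ hpQ]; simp
        have hcb : 2 * (c * b) = ξ := by
          have h2η : 2 * η = ξ := by rw [hη]; field_simp
          calc 2 * (c * b) = 2 * η * ((p : ℚ_[p]) ^ (-(M : ℤ)) * (p : ℚ_[p]) ^ (M : ℤ)) := by
                rw [hc, hb]; ring
            _ = ξ := by rw [hpM, h2η, mul_one]
        -- norm bound on b
        have hbnorm : ‖b‖ ≤ (p : ℝ) ^ (-(k : ℤ)) := by
          rw [hb, norm_mul, Padic.norm_p_zpow]
          have h2p : (2 : ℝ) ≤ (p : ℝ) := by exact_mod_cast hp.two_le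
          have hNp : (N : ℝ) ≤ (p : ℝ) ^ (N : ℤ) := by
            calc (N : ℝ) ≤ (2 : ℝ) ^ N := by exact_mod_cast (Nat.lt_two_pow_self (n := N)).le
            _ ≤ (p : ℝ) ^ N := by
                apply pow_le_pow_left₀ (by norm_num) h2p
            _ = (p : ℝ) ^ (N : ℤ) := by norm_cast
          have hppos : (0 : ℝ) < (p : ℝ) := by exact_mod_cast hp.pos
          calc ‖η‖ * (p : ℝ) ^ (-(M : ℤ)) ≤ (p : ℝ) ^ (N : ℤ) * (p : ℝ) ^ (-(M : ℤ)) := by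
                apply mul_le_mul_of_nonneg_right (le_trans hN.le hNp) (zpow_nonneg hppos.le _)
            _ = (p : ℝ) ^ ((N : ℤ) + (-(M : ℤ))) := (zpow_add₀ hppos.ne' _ _).symm
            _ = (p : ℝ) ^ (-(k : ℤ)) := by rw [hM]; push_cast; ring_nf
        -- define the series
        set s : LaurentSeries ℚ_[p] := HahnSeries.single (j : ℤ) c with hs
        set y : LaurentSeries ℚ_[p] := HahnSeries.single (d - j) b with hy
        have ha0 : (1 + s : LaurentSeries ℚ_[p]) ≠ 0 := by
          intro h
          have := congrArg (fun z : LaurentSeries ℚ_[p] => z.coeff 0) h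
          simp only [HahnSeries.coeff_add, HahnSeries.coeff_one, HahnSeries.coeff_zero] at this
          rw [hs, HahnSeries.coeff_single_of_ne (by exact_mod_cast (Nat.one_le_iff_ne_zero.mp hj1).symm)] at this
          simp at this
        set a : (LaurentSeries ℚ_[p])ˣ := Units.mk0 _ ha0 with hA
        have haval : (a : LaurentSeries ℚ_[p]) = 1 + s := rfl
        -- a fixes v
        have hav : ρT a v = v := by
          apply hj a _ v hvl
          intro m hm
          rw [haval]
          have : (1 + s - 1 : LaurentSeries ℚ_[p]) = s := by ring
          rw [this, hs]
          exact HahnSeries.coeff_single_of_ne (by omega)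
        have hainv : ρT a⁻¹ v = v := by
          conv_lhs => rw [← hav]
          rw [← Module.End.mul_apply, ← map_mul, inv_mul_cancel, map_one, Module.End.one_apply]
        -- y and -y fix v
        have hysupp : ∀ m : ℤ, m < d - 2 * j → y.coeff m = 0 := by
          intro m hm
          rw [hy]
          exact HahnSeries.coeff_single_of_ne (by omega)
        have hynorm : ∀ m : ℤ, ‖y.coeff m‖ ≤ (p : ℝ) ^ (-(k : ℤ)) := by
          intro m
          rw [hy, HahnSeries.coeff_single]
          split
          · exact hbnorm
          · simp only [norm_zero]
            positivity
        have hyv : ρN (ofAdd y) v = v := hk y hysupp hynorm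
        have hnyv : ρN (ofAdd (-y)) v = v := by
          apply hk
          · intro m hm; rw [HahnSeries.coeff_neg, hysupp m hm, neg_zero]
          · intro m; rw [HahnSeries.coeff_neg, norm_neg]; exact hynorm m
        -- a^2 y fixes v
        have ha2y : ρN (ofAdd ((a : LaurentSeries ℚ_[p]) ^ 2 * y)) v = v := by
          rw [← hrel a y]
          simp only [Module.End.mul_apply]
          rw [hainv, hyv, hav]
        -- the remainder z
        set z : LaurentSeries ℚ_[p] := x - ((a : LaurentSeries ℚ_[p]) ^ 2 * y - y) with hz
        have hexpand : (a : LaurentSeries ℚ_[p]) ^ 2 * y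
            = y + (s * y + s * y + s * (s * y)) := by
          rw [haval]; ring
        have hsy : s * y = HahnSeries.single d (c * b) := by
          rw [hs, hy, HahnSeries.single_mul_single]
          congr 1
          ring
        have hssy : s * HahnSeries.single d (c * b) = HahnSeries.single (d + j) (c * (c * b)) := by
          rw [hs, HahnSeries.single_mul_single]
          congr 1
          ring
        have hzv : ρN (ofAdd z) v = v := by
          apply IH
          intro m hm
          have hmd : m ≤ d := by omega
          rw [hz, HahnSeries.coeff_sub, HahnSeries.coeff_sub, hexpand]
          simp only [hsy, hssy, HahnSeries.coeff_add]
          rw [HahnSeries.coeff_single_of_ne (show m ≠ d + j by omega)]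
          rcases lt_or_eq_of_le hmd with hmd' | hmd'
          · rw [hx m hmd', HahnSeries.coeff_single_of_ne (show m ≠ d from hmd'.ne)]
            ring
          · subst hmd'
            rw [HahnSeries.coeff_single_same, ← hξ, ← hcb]
            ring
        -- assemble
        have hxdecomp : x = (a : LaurentSeries ℚ_[p]) ^ 2 * y + (-y + z) := by
          rw [hz]; ring
        have hofadd : ofAdd x
            = ofAdd ((a : LaurentSeries ℚ_[p]) ^ 2 * y) * (ofAdd (-y) * ofAdd z) := by
          rw [hxdecomp]; rfl
        rw [hofadd, map_mul ρN, map_mul ρN, Module.End.mul_apply, Module.End.mul_apply,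
          hzv, hnyv]
        exact ha2y
  by_cases hx0 : x = 0
  · subst hx0; simp
  · apply key (i - x.order).toNat
    intro m hm
    apply HahnSeries.coeff_eq_zero_of_lt_order
    have := Int.self_le_toNat (i - x.order)
    omega
end
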